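/- Let m ≥ 1 and f = x·((xz)^m + y^{2m}) in C[x,y,z], a polynomial of degree d = 2m + 1. Then for every integer j with 0 ≤ j ≤ d − 3, if (a,b,c) ∈ AR(f)_j satisfies a_x + b_y + c_z = 0, then (a,b,c) = (0,0,0). -/

import Mathlib

/-!
Write `m = n + 1` and `a, b, c` for the three components. Reducing
`a f_x + b f_y + c f_z = 0` modulo `x` gives `x ∣ a`, say `a = x A`. After dividing by `x`,
`y^(2m-1) (y A + 2m b)` is a multiple of `x^m z^(m-1)`; since the homogeneous polynomial
`y A + 2m b` has degree `j < 2m - 1`, it vanishes, and then so does `(m+1) z A + m c`.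
Substituting `b` and `c` into `a_x + b_y + c_z = 0`, the coefficient of `x^p y^q z^r` in `A`
gets multiplied by `2m(p+1) - (q+1) - 2(m+1)(r+1) = (2m+1)(p-r) - (j+2)`, which is never zero
because `2 ≤ j + 2 ≤ 2m`. Hence `A = 0`, and then `b = c = 0`.
-/

open MvPolynomial

/-- The Jacobian map sending a triple `(a,b,c)` to `a·f_x + b·f_y + c·f_z`. -/
noncomputable def jacMap (f : MvPolynomial (Fin 3) ℂ) :
    (Fin 3 → MvPolynomial (Fin 3) ℂ) →ₗ[MvPolynomial (Fin 3) ℂ] MvPolynomial (Fin 3) ℂ where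
  toFun v := ∑ i, v i * pderiv i f
  map_add' a b := by simp [add_mul, Finset.sum_add_distrib]
  map_smul' c a := by simp [Finset.mul_sum, mul_assoc]

/-- The module of Jacobian syzygies `AR(f)`. -/
noncomputable def AR (f : MvPolynomial (Fin 3) ℂ) :
    Submodule (MvPolynomial (Fin 3) ℂ) (Fin 3 → MvPolynomial (Fin 3) ℂ) :=
  LinearMap.ker (jacMap f)

namespace MvPolynomial

variable {σ R : Type*} [CommSemiring R]

theorem monomial_one_dvd_iff_le_of_mem_support {u : σ →₀ ℕ} {p : MvPolynomial σ R} :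
    monomial u (1 : R) ∣ p ↔ ∀ s ∈ p.support, u ≤ s := by
  constructor
  · rintro ⟨q, rfl⟩ s hs
    by_contra hus
    rw [mem_support_iff, coeff_monomial_mul', if_neg hus] at hs
    exact hs rfl
  · intro h
    rw [monomial_one_dvd_iff_modMonomial_eq_zero, eq_zero_iff]
    intro s
    by_cases hus : u ≤ s
    · exact coeff_modMonomial_of_le _ hus
    · rw [coeff_modMonomial_of_not_le _ hus]
      exact notMem_support_iff.mp fun hs ↦ hus (h s hs)

theorem monomial_one_dvd_of_dvd_monomial_one_mul {u w : σ →₀ ℕ}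
    (huw : Disjoint u.support w.support) {p : MvPolynomial σ R}
    (h : monomial u (1 : R) ∣ monomial w 1 * p) : monomial u (1 : R) ∣ p := by
  rw [monomial_one_dvd_iff_le_of_mem_support] at h ⊢
  intro s hs
  have hle : u ≤ w + s := h _ <| by
    rwa [mem_support_iff, coeff_monomial_mul, one_mul, ← mem_support_iff]
  intro i
  by_cases hi : u i = 0
  · simp [hi]
  · have hwi : w i = 0 :=
      Finsupp.notMem_support_iff.mp (Finset.disjoint_left.mp huw (Finsupp.mem_support_iff.mpr hi))
    simpa [hwi] using hle i

theorem IsHomogeneous.eq_zero_of_monomial_one_dvd {p : MvPolynomial σ R} {j : ℕ}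
    (hp : p.IsHomogeneous j) {u : σ →₀ ℕ} (hu : monomial u (1 : R) ∣ p) (hj : j < u.degree) :
    p = 0 := by
  rw [monomial_one_dvd_iff_le_of_mem_support] at hu
  ext s
  by_contra hs
  have hdeg : s.degree = j := by
    by_contra h
    exact hs (hp.coeff_eq_zero h)
  exact (Finsupp.degree_mono (hu s (mem_support_iff.mpr hs))).not_gt (hdeg ▸ hj)

theorem coeff_natCast_mul (k : ℕ) (p : MvPolynomial σ R) (s : σ →₀ ℕ) :
    coeff s ((k : MvPolynomial σ R) * p) = k * coeff s p := by
  rw [← map_natCast C, coeff_C_mul]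

theorem coeff_X_mul_pderiv (i : σ) (p : MvPolynomial σ R) (s : σ →₀ ℕ) :
    coeff s (X i * pderiv i p) = s i * coeff s p := by
  induction p using MvPolynomial.induction_on' with
  | monomial u r =>
    classical
    rw [X_mul_pderiv_monomial, coeff_smul, coeff_monomial, nsmul_eq_mul]
    split_ifs with h
    · rw [h]
    · simp
  | add p q hp hq => rw [map_add, mul_add, coeff_add, coeff_add, hp, hq, mul_add]

theorem coeff_pderiv_X_mul (i : σ) (p : MvPolynomial σ R) (s : σ →₀ ℕ) :
    coeff s (pderiv i (X i * p)) = (s i + 1) * coeff s p := by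
  classical
  rw [Derivation.leibniz, pderiv_X_self, smul_eq_mul, smul_eq_mul, mul_one, coeff_add,
    coeff_X_mul_pderiv]
  ring

end MvPolynomial

local notation "𝕊" => MvPolynomial (Fin 3) ℂ

lemma mem_AR_iff_syzygy (n : ℕ) (v : Fin 3 → 𝕊) :
    v ∈ AR (X 0 * ((X 0 * X 2) ^ (n + 1) + X 1 ^ (2 * (n + 1)))) ↔
      v 0 * (((n + 2 : ℕ) : 𝕊) * X 0 ^ (n + 1) * X 2 ^ (n + 1) + X 1 ^ (2 * n + 2)) +
        v 1 * (((2 * n + 2 : ℕ) : 𝕊) * X 0 * X 1 ^ (2 * n + 1)) +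
        v 2 * (((n + 1 : ℕ) : 𝕊) * X 0 ^ (n + 2) * X 2 ^ n) = 0 := by
  rw [AR, LinearMap.mem_ker, show 2 * (n + 1) = 2 * n + 1 + 1 by ring]
  change ∑ i, v i * pderiv i _ = 0 ↔ _
  convert Iff.rfl using 2
  simp only [Fin.isValue, Nat.cast_add, Nat.cast_ofNat, Nat.cast_mul, Nat.cast_one,
    Derivation.leibniz, map_add, Derivation.leibniz_pow, add_tsub_cancel_right, pderiv_X,
    Pi.single_apply, smul_eq_mul, mul_ite, mul_one, mul_zero, nsmul_eq_mul, smul_ite,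
    Fin.sum_univ_three, Fin.reduceEq, ↓reduceIte, zero_add, one_ne_zero, add_zero, zero_ne_one]
  ring

lemma X_zero_dvd_of_syzygy {n : ℕ} {a b c : 𝕊}
    (h : a * (((n + 2 : ℕ) : 𝕊) * X 0 ^ (n + 1) * X 2 ^ (n + 1) + X 1 ^ (2 * n + 2)) +
        b * (((2 * n + 2 : ℕ) : 𝕊) * X 0 * X 1 ^ (2 * n + 1)) +
        c * (((n + 1 : ℕ) : 𝕊) * X 0 ^ (n + 2) * X 2 ^ n) = 0) :
    X 0 ∣ a := by
  have hdvd : X 0 ∣ X 1 ^ (2 * n + 2) * a :=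
    ⟨-(((n + 2 : ℕ) : 𝕊) * a * X 0 ^ n * X 2 ^ (n + 1) +
        ((2 * n + 2 : ℕ) : 𝕊) * b * X 1 ^ (2 * n + 1) +
        ((n + 1 : ℕ) : 𝕊) * c * X 0 ^ (n + 1) * X 2 ^ n), by linear_combination h⟩
  rw [X, X_pow_eq_monomial] at hdvd
  exact monomial_one_dvd_of_dvd_monomial_one_mul (by simp) hdvd

lemma syzygy_linear_relations {n j : ℕ} (hj : j ≤ 2 * n) {A b c : 𝕊}
    (hA : (X 0 * A).IsHomogeneous j) (hb : b.IsHomogeneous j)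
    (h : X 0 * A * (((n + 2 : ℕ) : 𝕊) * X 0 ^ (n + 1) * X 2 ^ (n + 1) + X 1 ^ (2 * n + 2)) +
        b * (((2 * n + 2 : ℕ) : 𝕊) * X 0 * X 1 ^ (2 * n + 1)) +
        c * (((n + 1 : ℕ) : 𝕊) * X 0 ^ (n + 2) * X 2 ^ n) = 0) :
    X 1 * A + ((2 * n + 2 : ℕ) : 𝕊) * b = 0 ∧
      ((n + 2 : ℕ) : 𝕊) * (X 2 * A) + ((n + 1 : ℕ) : 𝕊) * c = 0 := by
  set g := X 1 * A + ((2 * n + 2 : ℕ) : 𝕊) * b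
  set k := ((n + 2 : ℕ) : 𝕊) * (X 2 * A) + ((n + 1 : ℕ) : 𝕊) * c
  have hgk : X 1 ^ (2 * n + 1) * g = X 0 ^ (n + 1) * X 2 ^ n * -k := by
    refine mul_left_cancel₀ (X_ne_zero 0) ?_
    linear_combination h
  -- `X 0 * g`, unlike `g`, is visibly homogeneous (of degree `j + 1`).
  have hg : X 0 * g = 0 := by
    have hdvd : X 0 ^ (n + 1) * X 2 ^ n ∣ g := by
      have : X 0 ^ (n + 1) * X 2 ^ n ∣ X 1 ^ (2 * n + 1) * g := hgk ▸ dvd_mul_right _ _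
      simp only [X_pow_eq_monomial, monomial_mul, one_mul] at this ⊢
      refine monomial_one_dvd_of_dvd_monomial_one_mul ?_ this
      rw [Finset.disjoint_left]
      intro i
      fin_cases i <;> simp
    have hdvd' : X 0 ^ (n + 2) * X 2 ^ n ∣ X 0 * g := by
      simpa only [pow_succ', mul_assoc] using mul_dvd_mul_left (X 0) hdvd
    simp only [X_pow_eq_monomial, monomial_mul, one_mul] at hdvd'
    refine IsHomogeneous.eq_zero_of_monomial_one_dvd (j := j + 1) ?_ hdvd' ?_
    · have hX0g : X 0 * g = X 1 * (X 0 * A) + C ((2 * n + 2 : ℕ) : ℂ) * (X 0 * b) := by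
        simp only [g, map_natCast]; ring
      rw [hX0g, add_comm j]
      exact ((isHomogeneous_X ℂ 1).mul hA).add (((isHomogeneous_X ℂ 0).mul hb).C_mul _)
    · simp only [map_add, Finsupp.degree_single]
      omega
  have hg0 : g = 0 := (mul_eq_zero.mp hg).resolve_left (X_ne_zero 0)
  refine ⟨hg0, ?_⟩
  rw [hg0, mul_zero, eq_comm, mul_eq_zero, neg_eq_zero] at hgk
  exact hgk.resolve_left (mul_ne_zero (pow_ne_zero _ (X_ne_zero 0)) (pow_ne_zero _ (X_ne_zero 2)))

lemma two_mul_succ_mul_succ_ne {n p q r : ℕ} (h : p + q + r < 2 * n) :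
    2 * (n + 1) * (p + 1) ≠ (q + 1) + 2 * (n + 2) * (r + 1) := by
  intro heq
  rcases le_or_gt p r with hpr | hpr
  · nlinarith
  · obtain ⟨t, rfl⟩ := Nat.exists_eq_add_of_lt hpr
    nlinarith

lemma eq_zero_of_pderiv_sum_eq_zero {n j : ℕ} (hj : j ≤ 2 * n) {A b c : 𝕊}
    (hA : (X 0 * A).IsHomogeneous j)
    (hb : X 1 * A + ((2 * n + 2 : ℕ) : 𝕊) * b = 0)
    (hc : ((n + 2 : ℕ) : 𝕊) * (X 2 * A) + ((n + 1 : ℕ) : 𝕊) * c = 0)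
    (hdiv : pderiv 0 (X 0 * A) + pderiv 1 b + pderiv 2 c = 0) : A = 0 := by
  have hb' := congrArg (pderiv 1) hb
  have hc' := congrArg (pderiv 2) hc
  simp only [map_add, map_zero, Derivation.leibniz (D := pderiv _) ((_ : ℕ) : 𝕊),
    Derivation.map_natCast, smul_eq_mul, mul_zero, add_zero] at hb' hc'
  have key : ((2 * n + 2 : ℕ) : 𝕊) * pderiv 0 (X 0 * A) =
      pderiv 1 (X 1 * A) + ((2 * (n + 2) : ℕ) : 𝕊) * pderiv 2 (X 2 * A) := by
    linear_combination (norm := (push_cast; ring1))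
      ((2 * n + 2 : ℕ) : 𝕊) * hdiv - hb' - 2 * hc'
  ext s
  rw [coeff_zero]
  by_contra hs
  have hdeg : s 0 + s 1 + s 2 + 1 = j := by
    have hs' : coeff (Finsupp.single 0 1 + s) (X 0 * A) ≠ 0 := by rwa [coeff_X_mul]
    have := not_imp_comm.mp hA.coeff_eq_zero hs'
    simpa [Finsupp.degree_eq_sum, Fin.sum_univ_three, add_comm, add_left_comm] using this
  apply two_mul_succ_mul_succ_ne (n := n) (p := s 0) (q := s 1) (r := s 2) (by omega)
  have := congrArg (coeff s) key
  simp only [coeff_natCast_mul, coeff_pderiv_X_mul, coeff_add] at this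
  have hcoeff : ((2 * (n + 1) * (s 0 + 1) : ℕ) : ℂ) * coeff s A =
      ((s 1 + 1 + 2 * (n + 2) * (s 2 + 1) : ℕ) : ℂ) * coeff s A := by
    push_cast at this ⊢
    linear_combination this
  exact_mod_cast mul_right_cancel₀ hs hcoeff

theorem stmt16 (m d : ℕ) (hm : 1 ≤ m) (hd : d = 2 * m + 1) :
    let f : MvPolynomial (Fin 3) ℂ := X 0 * ((X 0 * X 2) ^ m + X 1 ^ (2 * m))
    ∀ j : ℕ, j ≤ d - 3 → ∀ v : Fin 3 → MvPolynomial (Fin 3) ℂ,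
      v ∈ AR f → (∀ i, (v i).IsHomogeneous j) → (∑ i, pderiv i (v i)) = 0 → v = 0 := by
  intro f j hj v hv hhom hdiv
  obtain ⟨n, rfl⟩ := Nat.exists_eq_add_of_le' hm
  replace hj : j ≤ 2 * n := by omega
  rw [mem_AR_iff_syzygy] at hv
  obtain ⟨A, hA⟩ := X_zero_dvd_of_syzygy hv
  have hA_hom : (X 0 * A).IsHomogeneous j := hA ▸ hhom 0
  rw [hA] at hv
  rw [Fin.sum_univ_three, hA] at hdiv
  obtain ⟨hb, hc⟩ := syzygy_linear_relations hj hA_hom (hhom 1) hv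
  obtain rfl := eq_zero_of_pderiv_sum_eq_zero hj hA_hom hb hc hdiv
  simp only [mul_zero, zero_add] at hb hc
  have hb0 : v 1 = 0 := (mul_eq_zero.mp hb).resolve_left (Nat.cast_ne_zero.mpr (by omega))
  have hc0 : v 2 = 0 := (mul_eq_zero.mp hc).resolve_left (Nat.cast_ne_zero.mpr (by omega))
  ext1 i
  fin_cases i <;> simp [hA, hb0, hc0]
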